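/- arXiv:2311.06152 — 3 statements merged into one kernel-verified Lean document; each statement's English description precedes it below -/
import Mathlib

section
/- For a star graph and a path graph, each on 4 vertices all colored with the same color c₁, the RePHINE diagrams are identical for every choice of vertex and edge filter functions: both equal {(0,d,a,d),(0,d,a,d),(0,d,a,d),(0,∞,a,d)} with d = f_e({c₁,c₁}) and a = f_v(c₁). -/
open scoped Classical

noncomputable section

namespace PH

variable {V X : Type*}

/-- Number of connected components of a graph. -/
def numComponents (G : SimpleGraph V) : ℕ := Nat.card G.ConnectedComponent

/-- Sublevel set of a vertex filter function: `{v | φ v < t}` if `strict`, else `{v | φ v ≤ t}`. -/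
def sub (φ : V → ℝ) (strict : Bool) (t : ℝ) : Set V :=
  {v | if strict then φ v < t else φ v ≤ t}

/-- 0-dimensional persistent Betti number of the vertex filtration of `G` induced by `φ`:
the number of connected components of the sublevel graph at level `j` (strict if `sj`)
containing at least one vertex of the sublevel set at level `i` (strict if `si`),
i.e. the rank of the map `H₀(G_i) → H₀(G_j)`. -/
def vBetti (G : SimpleGraph V) (φ : V → ℝ) (si : Bool) (i : ℝ) (sj : Bool) (j : ℝ) : ℕ :=
  Nat.card {K : (G.induce (sub φ sj j)).ConnectedComponent //
    ∃ v : sub φ sj j, (v : V) ∈ sub φ si i ∧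
      (G.induce (sub φ sj j)).connectedComponentMk v = K}

/-- `β^{i,∞}`: components of the whole graph `G` containing a vertex of sublevel `i`. -/
def vBettiInf (G : SimpleGraph V) (φ : V → ℝ) (si : Bool) (i : ℝ) : ℕ :=
  Nat.card {K : G.ConnectedComponent // ∃ v, v ∈ sub φ si i ∧ G.connectedComponentMk v = K}

/-- The 0-dimensional persistence diagram of the vertex filtration of `G` induced by the
vertex filter `φ`, represented by its multiplicity function on pairs
(birth, death) ∈ ℝ × (ℝ ∪ {∞}).  Real holes `(b, ⊤)` are components of `G` with minimal
filter value `b`; trivial holes `(b, b)` are vertices of value `b` not giving birth to a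
new component; almost holes `(b, d)` with `b < d < ∞` get the multiplicity prescribed by
the Fundamental Lemma of Persistent Homology. -/
def vDiagram (G : SimpleGraph V) (φ : V → ℝ) : ℝ × WithTop ℝ → ℕ :=
  fun p =>
    p.2.recTopCoe (vBettiInf G φ false p.1 - vBettiInf G φ true p.1)
      (fun d =>
        if p.1 = d then
          Nat.card {v : V // φ v = d} -
            (vBetti G φ false d false d - vBetti G φ true d false d)
        else if p.1 < d then
          ((vBetti G φ false p.1 true d : ℤ) - (vBetti G φ false p.1 false d : ℤ)
            - (vBetti G φ true p.1 true d : ℤ) + (vBetti G φ true p.1 false d : ℤ)).toNat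
        else 0)

/-- The subgraph of `G` on all vertices, with the edges whose filter value is `< t`
(if `strict`) or `≤ t` (otherwise): one step of the edge filtration induced by `ψ`. -/
def eSub (G : SimpleGraph V) (ψ : Sym2 V → ℝ) (strict : Bool) (t : ℝ) : SimpleGraph V where
  Adj u v := G.Adj u v ∧ (if strict then ψ s(u, v) < t else ψ s(u, v) ≤ t)
  symm := ⟨fun u v h => ⟨h.1.symm, by rw [Sym2.eq_swap]; exact h.2⟩⟩
  loopless := ⟨fun v h => G.loopless.irrefl v h.1⟩

/-- The 0-dimensional persistence diagram of the edge filtration of `G` induced by the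
edge filter `ψ` (starting from the edgeless graph on `V` at time `0`), as a multiplicity
function: all births are `0`; the multiplicity of `(0, d)` is the number of components
dying at value `d`, and `(0, ⊤)` has multiplicity `β⁰(G)`. -/
def eDiagram (G : SimpleGraph V) (ψ : Sym2 V → ℝ) : ℝ × WithTop ℝ → ℕ :=
  fun p =>
    if p.1 = 0 then
      p.2.recTopCoe (numComponents G)
        (fun d => numComponents (eSub G ψ true d) - numComponents (eSub G ψ false d))
    else 0

/-- Component-wise colors of a vertex-colored graph, as the multiplicity function of the
multiset, over connected components, of the set of colors occurring in the component. -/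
def componentColors (G : SimpleGraph V) (c : V → X) : Set X → ℕ :=
  fun s => Nat.card {K : G.ConnectedComponent //
    {x | ∃ v, G.connectedComponentMk v = K ∧ c v = x} = s}

/-- `Q` is a color-separating set for `(G, c)` and `(G', c')`: deleting all vertices
whose color lies in `Q` yields graphs with distinct component-wise colors. -/
def ColorSeparating {V' : Type*} (G : SimpleGraph V) (G' : SimpleGraph V')
    (c : V → X) (c' : V' → X) (Q : Set X) : Prop :=
  componentColors (G.induce {v | c v ∉ Q}) (fun v => c v.1) ≠
    componentColors (G'.induce {v | c' v ∉ Q}) (fun v => c' v.1)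

/-- `S` is a separating set of `G`: removing `S` disconnects some connected component,
i.e. two vertices outside `S` are connected in `G` but not in `G - S`. -/
def IsSeparating (G : SimpleGraph V) (S : Set V) : Prop :=
  ∃ (u v : V) (hu : u ∈ (Sᶜ : Set V)) (hv : v ∈ (Sᶜ : Set V)),
    G.Reachable u v ∧ ¬ (G.induce (Sᶜ : Set V)).Reachable ⟨u, hu⟩ ⟨v, hv⟩

/-- Total number of almost holes (pairs `(b, d)` with `b < d < ∞`) in the 0-dim
persistence diagram of the vertex filtration induced by `φ`. -/
def almostHoleCount [Fintype V] (G : SimpleGraph V) (φ : V → ℝ) : ℕ :=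
  ∑ b ∈ Finset.image φ Finset.univ, ∑ d ∈ Finset.image φ Finset.univ,
    if b < d then vDiagram G φ (b, (d : WithTop ℝ)) else 0

/-- Number of pairs with birth time `b` in the 0-dim persistence diagram of the vertex
filtration induced by `φ`. -/
def birthCount [Fintype V] (G : SimpleGraph V) (φ : V → ℝ) (b : ℝ) : ℕ :=
  vDiagram G φ (b, ⊤) + ∑ d ∈ Finset.image φ Finset.univ, vDiagram G φ (b, (d : WithTop ℝ))

/-- `γ(w)`: the minimal edge-filter value over the edges incident to `w`. -/
def gammaVal (G : SimpleGraph V) (ψ : Sym2 V → ℝ) (w : V) : ℝ :=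
  sInf {r | ∃ v, G.Adj w v ∧ ψ s(w, v) = r}

/-- `v` is preferred over `w` as the surviving representative of a merged component in
the RePHINE elder rule: smaller vertex filter value, ties broken by smaller `γ`, then by
an (arbitrary) linear order on the vertices. -/
def better (G : SimpleGraph V) (ψ : Sym2 V → ℝ) (φ : V → ℝ) [LinearOrder V]
    (v w : V) : Prop :=
  φ v < φ w ∨ (φ v = φ w ∧ (gammaVal G ψ v < gammaVal G ψ w ∨
    (gammaVal G ψ v = gammaVal G ψ w ∧ v < w)))

/-- The death time of the vertex `w` in the RePHINE edge filtration: the first filtration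
value at which the connected component of `w` contains a preferred vertex (`⊤` if `w`
survives as the representative of a component of `G`). -/
def deathTime (G : SimpleGraph V) (ψ : Sym2 V → ℝ) (φ : V → ℝ) [LinearOrder V]
    (w : V) : WithTop ℝ :=
  if h : ∃ t : ℝ, ∃ v, better G ψ φ v w ∧ (eSub G ψ false t).Reachable v w then
    ((sInf {t : ℝ | ∃ v, better G ψ φ v w ∧ (eSub G ψ false t).Reachable v w} : ℝ)
      : WithTop ℝ)
  else ⊤

/-- Number of independent cycles (missing holes) created at edge-filtration value `d`:
edges of value `d` that do not kill a connected component. -/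
def missingCount (G : SimpleGraph V) (ψ : Sym2 V → ℝ) (d : ℝ) : ℕ :=
  Nat.card {e : G.edgeSet // ψ (e : Sym2 V) = d} -
    (numComponents (eSub G ψ true d) - numComponents (eSub G ψ false d))

/-- The RePHINE diagram of a graph `G` with vertex filter `φ` and edge filter `ψ`, as a
multiplicity function on tuples `(b, d, α, γ)`: for `b = 0` each vertex `w` contributes
`(0, death w, φ w, γ w)`; for `b = 1` each independent cycle created at value `d`
contributes a missing hole `(1, d, 0, 0)`. -/
def rephineAux (G : SimpleGraph V) [LinearOrder V] (φ : V → ℝ) (ψ : Sym2 V → ℝ) :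
    ℝ × WithTop ℝ × ℝ × ℝ → ℕ :=
  fun p =>
    if p.1 = 0 then
      Nat.card {w : V // deathTime G ψ φ w = p.2.1 ∧ φ w = p.2.2.1 ∧
        gammaVal G ψ w = p.2.2.2}
    else if p.1 = 1 ∧ p.2.2.1 = 0 ∧ p.2.2.2 = 0 then
      p.2.1.recTopCoe 0 (fun d => missingCount G ψ d)
    else 0

/-- The RePHINE diagram of a vertex-colored graph with derived edge colors
`l(u,v) = {c u, c v}`, for a vertex-color filter `fv` and an edge-color filter `fe`. -/
def rephine (G : SimpleGraph V) [LinearOrder V] (c : V → X) (fv : X → ℝ)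
    (fe : Sym2 X → ℝ) : ℝ × WithTop ℝ × ℝ × ℝ → ℕ :=
  rephineAux G (fun v => fv (c v)) (fun e => fe (Sym2.map c e))

/-- The edge filter on derived edge colors given by the max of the endpoint values. -/
def maxFe (f : X → ℝ) : Sym2 X → ℝ :=
  Sym2.lift ⟨fun x y => max (f x) (f y), fun x y => max_comm _ _⟩

end PH

/-- The star `K_{1,3}` on 4 vertices. -/
def star17 : SimpleGraph (Fin 4) := SimpleGraph.fromEdgeSet {s(0, 1), s(0, 2), s(0, 3)}

/-- The path `P₄` on 4 vertices. -/
def path17 : SimpleGraph (Fin 4) := SimpleGraph.fromEdgeSet {s(0, 1), s(1, 2), s(2, 3)}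

section Aux

open PH

variable {G : SimpleGraph (Fin 4)} {a d : ℝ}

lemma gamma_const (hdeg : ∀ w : Fin 4, ∃ v, G.Adj w v) (w : Fin 4) :
    PH.gammaVal G (fun _ => d) w = d := by
  unfold PH.gammaVal
  have h : {r | ∃ v, G.Adj w v ∧ (fun _ : Sym2 (Fin 4) => d) s(w, v) = r} = {d} := by
    ext r
    simp only [Set.mem_setOf_eq, Set.mem_singleton_iff]
    constructor
    · rintro ⟨v, _, rfl⟩; rfl
    · rintro rfl; obtain ⟨v, hv⟩ := hdeg w; exact ⟨v, hv, rfl⟩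
  rw [h, csInf_singleton]

lemma better_iff (hdeg : ∀ w : Fin 4, ∃ v, G.Adj w v) (v w : Fin 4) :
    PH.better G (fun _ => d) (fun _ => a) v w ↔ v < w := by
  unfold PH.better
  rw [gamma_const hdeg, gamma_const hdeg]
  simp

lemma eSub_false_of_le {t : ℝ} (h : d ≤ t) :
    PH.eSub G (fun _ => d) false t = G := by
  ext u v
  simp [PH.eSub, h]

lemma eSub_false_of_lt {t : ℝ} (h : t < d) :
    PH.eSub G (fun _ => d) false t = ⊥ := by
  ext u v
  simp [PH.eSub, not_le.mpr h]

lemma eSub_true_self :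
    PH.eSub G (fun _ => d) true d = (⊥ : SimpleGraph (Fin 4)) := by
  ext u v
  simp [PH.eSub]

lemma numComponents_of_connected {V : Type*} {H : SimpleGraph V} (h : H.Connected) :
    PH.numComponents H = 1 := by
  unfold PH.numComponents
  rw [Nat.card_eq_one_iff_unique]
  constructor
  · constructor
    intro K L
    refine SimpleGraph.ConnectedComponent.ind₂ (fun u v => ?_) K L
    exact SimpleGraph.ConnectedComponent.sound (h.preconnected u v)
  · exact ⟨SimpleGraph.connectedComponentMk H (Classical.choice h.nonempty)⟩

lemma numComponents_bot : PH.numComponents (⊥ : SimpleGraph (Fin 4)) = 4 := by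
  unfold PH.numComponents
  have hb : Function.Bijective (SimpleGraph.connectedComponentMk (⊥ : SimpleGraph (Fin 4))) := by
    constructor
    · intro u v h
      exact SimpleGraph.reachable_bot.1 (SimpleGraph.ConnectedComponent.exact h)
    · intro K
      exact K.ind fun v => ⟨v, rfl⟩
  rw [← Nat.card_eq_of_bijective _ hb]
  simp [Nat.card_eq_fintype_card]

lemma deathTime_eq (hconn : G.Connected) (hdeg : ∀ w : Fin 4, ∃ v, G.Adj w v) (w : Fin 4) :
    PH.deathTime G (fun _ => d) (fun _ => a) w = if w = 0 then ⊤ else (d : WithTop ℝ) := by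
  by_cases hw : w = 0
  · subst hw
    rw [if_pos rfl]
    unfold PH.deathTime
    rw [dif_neg]
    rintro ⟨t, v, hb, -⟩
    exact absurd ((better_iff hdeg v 0).1 hb) (by simp)
  · rw [if_neg hw]
    have hS : {t : ℝ | ∃ v, PH.better G (fun _ => d) (fun _ => a) v w ∧
        (PH.eSub G (fun _ => d) false t).Reachable v w} = Set.Ici d := by
      ext t
      simp only [Set.mem_setOf_eq, Set.mem_Ici]
      constructor
      · rintro ⟨v, hb, hr⟩
        by_contra hlt
        rw [eSub_false_of_lt (not_le.1 hlt)] at hr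
        have := SimpleGraph.reachable_bot.1 hr
        subst this
        exact lt_irrefl _ ((better_iff hdeg v v).1 hb)
      · intro ht
        refine ⟨0, (better_iff hdeg 0 w).2 (by omega), ?_⟩
        rw [eSub_false_of_le ht]
        exact hconn.preconnected 0 w
    unfold PH.deathTime
    rw [dif_pos]
    · congr 1
      rw [hS]
      exact csInf_Ici
    · have hd : d ∈ Set.Ici d := Set.self_mem_Ici
      rw [← hS] at hd
      exact ⟨d, hd⟩

lemma missingCount_eq (hconn : G.Connected) (hcard : Nat.card G.edgeSet ≤ 3) (d' : ℝ) :
    PH.missingCount G (fun _ => d) d' = 0 := by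
  unfold PH.missingCount
  by_cases h : d = d'
  · subst h
    have h1 : PH.numComponents (PH.eSub G (fun _ => d) true d) = 4 := by
      rw [eSub_true_self]; exact numComponents_bot
    have h2 : PH.numComponents (PH.eSub G (fun _ => d) false d) = 1 := by
      rw [eSub_false_of_le le_rfl]; exact numComponents_of_connected hconn
    have h3 : Nat.card {e : G.edgeSet // (fun _ : Sym2 (Fin 4) => d) (e : Sym2 (Fin 4)) = d}
        = Nat.card G.edgeSet :=
      Nat.card_congr (Equiv.subtypeUnivEquiv fun _ => rfl)
    rw [h1, h2, h3]
    omega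
  · have h3 : Nat.card {e : G.edgeSet // (fun _ : Sym2 (Fin 4) => d) (e : Sym2 (Fin 4)) = d'}
        = 0 := by
      have : IsEmpty {e : G.edgeSet // (fun _ : Sym2 (Fin 4) => d) (e : Sym2 (Fin 4)) = d'} :=
        ⟨fun e => h e.2⟩
      exact Nat.card_of_isEmpty
    rw [h3]
    simp

lemma star17_adj01 : star17.Adj 0 1 := by
  rw [star17, SimpleGraph.fromEdgeSet_adj]; exact ⟨by simp, by decide⟩
lemma star17_adj02 : star17.Adj 0 2 := by
  rw [star17, SimpleGraph.fromEdgeSet_adj]; exact ⟨by simp, by decide⟩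
lemma star17_adj03 : star17.Adj 0 3 := by
  rw [star17, SimpleGraph.fromEdgeSet_adj]; exact ⟨by simp, by decide⟩
lemma path17_adj01 : path17.Adj 0 1 := by
  rw [path17, SimpleGraph.fromEdgeSet_adj]; exact ⟨by simp, by decide⟩
lemma path17_adj12 : path17.Adj 1 2 := by
  rw [path17, SimpleGraph.fromEdgeSet_adj]; exact ⟨by simp, by decide⟩
lemma path17_adj23 : path17.Adj 2 3 := by
  rw [path17, SimpleGraph.fromEdgeSet_adj]; exact ⟨by simp, by decide⟩

lemma star17_conn : star17.Connected := by
  rw [SimpleGraph.connected_iff]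
  refine ⟨?_, ⟨0⟩⟩
  have h : ∀ w : Fin 4, star17.Reachable 0 w := by
    intro w
    fin_cases w
    · exact SimpleGraph.Reachable.refl 0
    · exact star17_adj01.reachable
    · exact star17_adj02.reachable
    · exact star17_adj03.reachable
  exact fun u v => (h u).symm.trans (h v)

lemma path17_conn : path17.Connected := by
  rw [SimpleGraph.connected_iff]
  refine ⟨?_, ⟨0⟩⟩
  have h : ∀ w : Fin 4, path17.Reachable 0 w := by
    intro w
    fin_cases w
    · exact SimpleGraph.Reachable.refl 0
    · exact path17_adj01.reachable
    · exact path17_adj01.reachable.trans path17_adj12.reachable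
    · exact (path17_adj01.reachable.trans path17_adj12.reachable).trans path17_adj23.reachable
  exact fun u v => (h u).symm.trans (h v)

lemma star17_deg : ∀ w : Fin 4, ∃ v, star17.Adj w v := by
  intro w
  fin_cases w
  · exact ⟨1, star17_adj01⟩
  · exact ⟨0, star17_adj01.symm⟩
  · exact ⟨0, star17_adj02.symm⟩
  · exact ⟨0, star17_adj03.symm⟩

lemma path17_deg : ∀ w : Fin 4, ∃ v, path17.Adj w v := by
  intro w
  fin_cases w
  · exact ⟨1, path17_adj01⟩
  · exact ⟨0, path17_adj01.symm⟩
  · exact ⟨1, path17_adj12.symm⟩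
  · exact ⟨2, path17_adj23.symm⟩

lemma card_fromEdgeSet_le (e1 e2 e3 : Sym2 (Fin 4)) :
    Nat.card (SimpleGraph.fromEdgeSet {e1, e2, e3}).edgeSet ≤ 3 := by
  rw [Nat.card_coe_set_eq]
  have hsub : (SimpleGraph.fromEdgeSet {e1, e2, e3}).edgeSet ⊆ {e1, e2, e3} := by
    rw [SimpleGraph.edgeSet_fromEdgeSet]; exact Set.diff_subset
  have hfin : ({e1, e2, e3} : Set (Sym2 (Fin 4))).Finite :=
    (Set.finite_singleton e3).insert e2 |>.insert e1
  calc (SimpleGraph.fromEdgeSet {e1, e2, e3}).edgeSet.ncard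
      ≤ ({e1, e2, e3} : Set (Sym2 (Fin 4))).ncard := Set.ncard_le_ncard hsub hfin
    _ ≤ ({e2, e3} : Set (Sym2 (Fin 4))).ncard + 1 := Set.ncard_insert_le _ _
    _ ≤ (({e3} : Set (Sym2 (Fin 4))).ncard + 1) + 1 := by
        have := Set.ncard_insert_le e2 ({e3} : Set (Sym2 (Fin 4)))
        omega
    _ ≤ 3 := by rw [Set.ncard_singleton]
lemma card_eq_zero {w0 : Fin 4} : Nat.card {w : Fin 4 // w = w0} = 1 := by
  rw [Nat.card_eq_fintype_card, Fintype.card_subtype_eq]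

lemma card_ne_zero : Nat.card {w : Fin 4 // w ≠ 0} = 3 := by
  rw [Nat.card_eq_fintype_card]
  decide

lemma key (hconn : G.Connected) (hdeg : ∀ w : Fin 4, ∃ v, G.Adj w v)
    (hcard : Nat.card G.edgeSet ≤ 3) (p : ℝ × WithTop ℝ × ℝ × ℝ) :
    PH.rephineAux G (fun _ => a) (fun _ => d) p = Multiset.count p
      ({(0, (d : WithTop ℝ), a, d), (0, (d : WithTop ℝ), a, d), (0, (d : WithTop ℝ), a, d),
        (0, (⊤ : WithTop ℝ), a, d)} : Multiset (ℝ × WithTop ℝ × ℝ × ℝ)) := by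
  obtain ⟨b, t, x, y⟩ := p
  unfold PH.rephineAux
  by_cases hb : b = 0
  · subst hb
    rw [if_pos rfl]
    by_cases hx : a = x
    · by_cases hy : d = y
      · subst hx; subst hy
        have hcongr : ∀ t : WithTop ℝ,
            Nat.card {w : Fin 4 // PH.deathTime G (fun _ => d) (fun _ => a) w = t ∧
              (fun _ : Fin 4 => a) w = a ∧ PH.gammaVal G (fun _ => d) w = d} =
            Nat.card {w : Fin 4 // (if w = 0 then (⊤ : WithTop ℝ) else (d : WithTop ℝ)) = t} := by
          intro t
          apply Nat.card_congr
          apply Equiv.subtypeEquivRight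
          intro w
          rw [deathTime_eq hconn hdeg w, gamma_const hdeg]
          simp
        induction t using WithTop.recTopCoe with
        | top =>
          rw [show ((0 : ℝ), (⊤ : WithTop ℝ), a, d).2 = ((⊤ : WithTop ℝ), a, d) from rfl]
          rw [hcongr]
          have h1 : Nat.card {w : Fin 4 //
              (if w = 0 then (⊤ : WithTop ℝ) else (d : WithTop ℝ)) = ⊤} = 1 := by
            refine Eq.trans ?_ (card_eq_zero (w0 := 0))
            apply Nat.card_congr
            apply Equiv.subtypeEquivRight
            intro w
            by_cases hw : w = 0 <;> simp [hw]
          rw [h1]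
          simp [Multiset.count_cons, Prod.ext_iff]
        | coe t' =>
          rw [hcongr]
          by_cases ht : t' = d
          · subst ht
            have h3 : Nat.card {w : Fin 4 //
                (if w = 0 then (⊤ : WithTop ℝ) else (t' : WithTop ℝ)) = (t' : WithTop ℝ)} = 3 := by
              refine Eq.trans ?_ card_ne_zero
              apply Nat.card_congr
              apply Equiv.subtypeEquivRight
              intro w
              by_cases hw : w = 0 <;> simp [hw]
            rw [h3]
            simp [Multiset.count_cons, Prod.ext_iff]
          · have h0 : Nat.card {w : Fin 4 //
                (if w = 0 then (⊤ : WithTop ℝ) else (d : WithTop ℝ)) = (t' : WithTop ℝ)} = 0 := by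
              have : IsEmpty {w : Fin 4 //
                  (if w = 0 then (⊤ : WithTop ℝ) else (d : WithTop ℝ)) = (t' : WithTop ℝ)} := by
                constructor
                rintro ⟨w, hw⟩
                by_cases h : w = 0
                · rw [if_pos h] at hw; exact (WithTop.top_ne_coe) hw
                · rw [if_neg h] at hw
                  exact ht (WithTop.coe_injective hw).symm
              exact Nat.card_of_isEmpty
            rw [h0]
            have hne : (t' : WithTop ℝ) ≠ (d : WithTop ℝ) := by
              simpa using ht
            simp [Multiset.count_cons, Prod.ext_iff, hne]
      · have h0 : Nat.card {w : Fin 4 // PH.deathTime G (fun _ => d) (fun _ => a) w = t ∧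
            (fun _ : Fin 4 => a) w = x ∧ PH.gammaVal G (fun _ => d) w = y} = 0 := by
          have : IsEmpty {w : Fin 4 // PH.deathTime G (fun _ => d) (fun _ => a) w = t ∧
              (fun _ : Fin 4 => a) w = x ∧ PH.gammaVal G (fun _ => d) w = y} := by
            constructor
            rintro ⟨w, -, -, hw⟩
            exact hy (by rw [← hw, gamma_const hdeg])
          exact Nat.card_of_isEmpty
        rw [h0]
        have hyd : y ≠ d := fun h => hy h.symm
        simp [Multiset.count_cons, Multiset.count_singleton, Prod.ext_iff, hyd]
    · have h0 : Nat.card {w : Fin 4 // PH.deathTime G (fun _ => d) (fun _ => a) w = t ∧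
          (fun _ : Fin 4 => a) w = x ∧ PH.gammaVal G (fun _ => d) w = y} = 0 := by
        have : IsEmpty {w : Fin 4 // PH.deathTime G (fun _ => d) (fun _ => a) w = t ∧
            (fun _ : Fin 4 => a) w = x ∧ PH.gammaVal G (fun _ => d) w = y} :=
          ⟨fun ⟨w, hw⟩ => hx hw.2.1⟩
        exact Nat.card_of_isEmpty
      rw [h0]
      have hxa : x ≠ a := fun h => hx h.symm
      simp [Multiset.count_cons, Multiset.count_singleton, Prod.ext_iff, hxa]
  · rw [if_neg hb]
    have hrhs : Multiset.count ((b, t, x, y) : ℝ × WithTop ℝ × ℝ × ℝ)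
        ({(0, (d : WithTop ℝ), a, d), (0, (d : WithTop ℝ), a, d), (0, (d : WithTop ℝ), a, d),
          (0, (⊤ : WithTop ℝ), a, d)} : Multiset (ℝ × WithTop ℝ × ℝ × ℝ)) = 0 := by
      simp [Multiset.count_cons, Prod.ext_iff, hb]
    rw [hrhs]
    split_ifs with h
    · induction t using WithTop.recTopCoe with
      | top => rfl
      | coe t' =>
        show PH.missingCount G (fun _ => d) t' = 0
        exact missingCount_eq hconn hcard t'
    · rfl
end Aux

/-- RePHINE cannot separate the star and the path on 4 vertices all
colored `x₁`: for every vertex filter `f_v` and edge filter `f_e`, both RePHINE diagrams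
equal `{(0,d,a,d),(0,d,a,d),(0,d,a,d),(0,∞,a,d)}` with `d = f_e({x₁,x₁})`, `a = f_v x₁`. -/
theorem stmt17 (X : Type) (x₁ : X) (fv : X → ℝ) (fe : Sym2 X → ℝ) :
    (∀ p, PH.rephine star17 (fun _ => x₁) fv fe p = Multiset.count p
      ({(0, ((fe s(x₁, x₁) : ℝ) : WithTop ℝ), fv x₁, fe s(x₁, x₁)),
        (0, ((fe s(x₁, x₁) : ℝ) : WithTop ℝ), fv x₁, fe s(x₁, x₁)),
        (0, ((fe s(x₁, x₁) : ℝ) : WithTop ℝ), fv x₁, fe s(x₁, x₁)),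
        (0, (⊤ : WithTop ℝ), fv x₁, fe s(x₁, x₁))} :
        Multiset (ℝ × WithTop ℝ × ℝ × ℝ))) ∧
    (∀ p, PH.rephine path17 (fun _ => x₁) fv fe p = Multiset.count p
      ({(0, ((fe s(x₁, x₁) : ℝ) : WithTop ℝ), fv x₁, fe s(x₁, x₁)),
        (0, ((fe s(x₁, x₁) : ℝ) : WithTop ℝ), fv x₁, fe s(x₁, x₁)),
        (0, ((fe s(x₁, x₁) : ℝ) : WithTop ℝ), fv x₁, fe s(x₁, x₁)),
        (0, (⊤ : WithTop ℝ), fv x₁, fe s(x₁, x₁))} :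
        Multiset (ℝ × WithTop ℝ × ℝ × ℝ))) ∧
    PH.rephine star17 (fun _ => x₁) fv fe = PH.rephine path17 (fun _ => x₁) fv fe := by
  have hfun : (fun e : Sym2 (Fin 4) => fe (Sym2.map (fun _ => x₁) e)) =
      fun _ => fe s(x₁, x₁) := by
    funext e
    induction e using Sym2.ind with
    | _ u v => simp
  have hstar : ∀ p, PH.rephine star17 (fun _ => x₁) fv fe p = Multiset.count p
      ({(0, ((fe s(x₁, x₁) : ℝ) : WithTop ℝ), fv x₁, fe s(x₁, x₁)),
        (0, ((fe s(x₁, x₁) : ℝ) : WithTop ℝ), fv x₁, fe s(x₁, x₁)),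
        (0, ((fe s(x₁, x₁) : ℝ) : WithTop ℝ), fv x₁, fe s(x₁, x₁)),
        (0, (⊤ : WithTop ℝ), fv x₁, fe s(x₁, x₁))} :
        Multiset (ℝ × WithTop ℝ × ℝ × ℝ)) := by
    intro p
    show PH.rephineAux star17 _ _ p = _
    rw [hfun]
    exact key star17_conn star17_deg (card_fromEdgeSet_le _ _ _) p
  have hpath : ∀ p, PH.rephine path17 (fun _ => x₁) fv fe p = Multiset.count p
      ({(0, ((fe s(x₁, x₁) : ℝ) : WithTop ℝ), fv x₁, fe s(x₁, x₁)),
        (0, ((fe s(x₁, x₁) : ℝ) : WithTop ℝ), fv x₁, fe s(x₁, x₁)),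
        (0, ((fe s(x₁, x₁) : ℝ) : WithTop ℝ), fv x₁, fe s(x₁, x₁)),
        (0, (⊤ : WithTop ℝ), fv x₁, fe s(x₁, x₁))} :
        Multiset (ℝ × WithTop ℝ × ℝ × ℝ)) := by
    intro p
    show PH.rephineAux path17 _ _ p = _
    rw [hfun]
    exact key path17_conn path17_deg (card_fromEdgeSet_le _ _ _) p
  exact ⟨hstar, hpath, funext fun p => (hstar p).trans (hpath p).symm⟩

end
end

section
/- Let G and G' be vertex-colored graphs and f an injective vertex-color filter with 0-dim persistence diagrams D_G ≠ D_{G'} for the induced vertex-color filtrations. Then there exist vertex and edge filter functions f_v, f_e (with f_e defined on derived edge colors {c(u),c(v)}) such that the RePHINE diagrams of G and G' differ; namely take f_v = f and f_e({x,y}) = max(f(x), f(y)), under which the vertex-color persistence information is recoverable from the (death, α)-components of the RePHINE tuples and 1-dim pairs correspond to missing holes. -/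
open scoped Classical

noncomputable section

section Aux
set_option linter.unusedSectionVars false
set_option linter.unusedVariables false
namespace PH

variable {V : Type} [Fintype V] [LinearOrder V] (G : SimpleGraph V) (φ : V → ℝ)

/-- The max-of-endpoints edge filter induced by a vertex filter. -/
def mpsi (φ : V → ℝ) : Sym2 V → ℝ :=
  Sym2.lift ⟨fun u v => max (φ u) (φ v), fun _ _ => max_comm _ _⟩

lemma mpsi_mk (u v : V) : mpsi φ s(u, v) = max (φ u) (φ v) := rfl

/-- The lexicographic key implementing the `better` order. -/
def key (w : V) : ℝ ×ₗ (ℝ ×ₗ V) := toLex (φ w, toLex (gammaVal G (mpsi φ) w, w))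

lemma better_iff (v w : V) :
    better G (mpsi φ) φ v w ↔ key G φ v < key G φ w := by
  simp [better, key, Prod.Lex.lt_iff]

lemma key_injective : Function.Injective (key G φ) := by
  intro v w h
  have := (Prod.ext_iff.mp (toLex.injective h)).2
  exact (Prod.ext_iff.mp (toLex.injective this)).2

lemma key_fst_mono {v w : V} (h : key G φ v ≤ key G φ w) : φ v ≤ φ w := by
  simp only [key] at h
  rcases Prod.Lex.le_iff.mp h with h | ⟨h, _⟩
  · exact h.le
  · exact h.le

lemma eSub_adj_iff (s : Bool) (j : ℝ) (a b : V) :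
    (eSub G (mpsi φ) s j).Adj a b ↔ G.Adj a b ∧ a ∈ sub φ s j ∧ b ∈ sub φ s j := by
  cases s <;>
    simp [eSub, sub, mpsi_mk, max_le_iff, max_lt_iff, Set.mem_setOf_eq, and_assoc]

lemma eSub_le (ψ : Sym2 V → ℝ) (s : Bool) (j : ℝ) : eSub G ψ s j ≤ G :=
  fun _ _ h => h.1

lemma eSub_mono (ψ : Sym2 V → ℝ) {t t' : ℝ} (h : t ≤ t') :
    eSub G ψ false t ≤ eSub G ψ false t' :=
  fun _ _ ha => ⟨ha.1, by have := ha.2; simp only [if_neg Bool.false_ne_true] at *; linarith⟩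

lemma eSub_strict_le (ψ : Sym2 V → ℝ) (t : ℝ) : eSub G ψ true t ≤ eSub G ψ false t := by
  intro a b ha
  refine ⟨ha.1, ?_⟩
  have := ha.2
  simp only [if_pos rfl] at this
  simp [this.le]

lemma walk_induce {s : Bool} {j : ℝ} :
    ∀ {u w : V}, (eSub G (mpsi φ) s j).Walk u w → ∀ (hu : u ∈ sub φ s j)
      (hw : w ∈ sub φ s j), (G.induce (sub φ s j)).Reachable ⟨u, hu⟩ ⟨w, hw⟩
  | u, _, SimpleGraph.Walk.nil, hu, hw => SimpleGraph.Reachable.refl _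
  | u, w, SimpleGraph.Walk.cons h p, hu, hw => by
    obtain ⟨hG, _, hx⟩ := (eSub_adj_iff G φ s j _ _).mp h
    exact (SimpleGraph.Adj.reachable (by simpa using hG :
      (G.induce (sub φ s j)).Adj ⟨u, hu⟩ ⟨_, hx⟩)).trans (walk_induce p hx hw)

lemma reachable_induce_iff {s : Bool} {j : ℝ} {u w : V} (hu : u ∈ sub φ s j)
    (hw : w ∈ sub φ s j) :
    (G.induce (sub φ s j)).Reachable ⟨u, hu⟩ ⟨w, hw⟩ ↔
      (eSub G (mpsi φ) s j).Reachable u w := by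
  constructor
  · intro h
    exact SimpleGraph.Reachable.map
      ⟨Subtype.val, fun {a b} hab =>
        (eSub_adj_iff G φ s j _ _).mpr ⟨by simpa using hab, a.2, b.2⟩⟩ h
  · intro ⟨p⟩
    exact walk_induce G φ p hu hw

lemma start_mem_of_reachable {s : Bool} {j : ℝ} {v w : V} (hvw : v ≠ w)
    (h : (eSub G (mpsi φ) s j).Reachable v w) : v ∈ sub φ s j := by
  obtain ⟨p⟩ := h
  cases p with
  | nil => exact absurd rfl hvw
  | cons h p => exact ((eSub_adj_iff G φ s j _ _).mp h).2.1

lemma walkLevel {H : SimpleGraph V} (hH : H ≤ G) :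
    ∀ {v w : V}, H.Walk v w → v ≠ w →
      ∃ r : ℝ, (eSub G (mpsi φ) false r).Reachable v w ∧
        ∃ a b : V, H.Adj a b ∧ mpsi φ s(a, b) = r
  | v, _, SimpleGraph.Walk.nil, hvw => absurd rfl hvw
  | v, w, @SimpleGraph.Walk.cons _ _ _ x _ h p, hvw => by
    by_cases hxw : x = w
    · subst hxw
      exact ⟨mpsi φ s(v, x), SimpleGraph.Adj.reachable ⟨hH h, by simp⟩, v, x, h, rfl⟩
    · obtain ⟨r, hre, a, b, hab, hr⟩ := walkLevel hH p hxw
      have hadj : (eSub G (mpsi φ) false (max r (mpsi φ s(v, x)))).Adj v x :=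
        ⟨hH h, by simp [le_max_right]⟩
      refine ⟨max r (mpsi φ s(v, x)),
        hadj.reachable.trans (hre.mono (eSub_mono G (mpsi φ) (le_max_left _ _))), ?_⟩
      rcases le_total (mpsi φ s(v, x)) r with h' | h'
      · exact ⟨a, b, hab, by rw [max_eq_left h']; exact hr⟩
      · exact ⟨v, x, h, (max_eq_right h').symm⟩

/-- The set of levels at which `w` is merged into a better component. -/
def TS (w : V) : Set ℝ :=
  {t | ∃ v, better G (mpsi φ) φ v w ∧ (eSub G (mpsi φ) false t).Reachable v w}

lemma deathTime_eq (w : V) :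
    deathTime G (mpsi φ) φ w =
      if (TS G φ w).Nonempty then ((sInf (TS G φ w) : ℝ) : WithTop ℝ) else ⊤ := by
  rfl

lemma TS_mono {w : V} {t t' : ℝ} (h : t ≤ t') (ht : t ∈ TS G φ w) : t' ∈ TS G φ w := by
  obtain ⟨v, hb, hre⟩ := ht
  exact ⟨v, hb, hre.mono (eSub_mono G (mpsi φ) h)⟩

lemma better_ne {v w : V} (h : better G (mpsi φ) φ v w) : v ≠ w := by
  intro he; subst he
  exact lt_irrefl _ ((better_iff G φ v v).mp h)

lemma TS_reduce {w : V} {t : ℝ} (ht : t ∈ TS G φ w) :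
    ∃ r ∈ TS G φ w, r ≤ t ∧ r ∈ Finset.image (fun p : V × V => mpsi φ s(p.1, p.2))
      Finset.univ := by
  obtain ⟨v, hb, ⟨p⟩⟩ := ht
  obtain ⟨r, hre, a, b, hab, hr⟩ :=
    walkLevel G φ (eSub_le G (mpsi φ) false t) p (better_ne G φ hb)
  refine ⟨r, ⟨v, hb, hre⟩, ?_, Finset.mem_image.mpr ⟨(a, b), Finset.mem_univ _, hr⟩⟩
  have := hab.2
  simp only [if_neg Bool.false_ne_true] at this
  linarith [hr]

lemma TS_csInf_mem {w : V} (h : (TS G φ w).Nonempty) :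
    sInf (TS G φ w) ∈ TS G φ w ∧ ∀ t ∈ TS G φ w, sInf (TS G φ w) ≤ t := by
  classical
  set F := (Finset.image (fun p : V × V => mpsi φ s(p.1, p.2)) Finset.univ).filter
    (· ∈ TS G φ w) with hFdef
  obtain ⟨t, ht⟩ := h
  obtain ⟨r, hrT, hrt, hrE⟩ := TS_reduce G φ ht
  have hFne : F.Nonempty := ⟨r, Finset.mem_filter.mpr ⟨hrE, hrT⟩⟩
  have hlb : ∀ t ∈ TS G φ w, F.min' hFne ≤ t := by
    intro t ht
    obtain ⟨r, hrT, hrt, hrE⟩ := TS_reduce G φ ht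
    exact le_trans (F.min'_le r (Finset.mem_filter.mpr ⟨hrE, hrT⟩)) hrt
  have hmem : F.min' hFne ∈ TS G φ w := (Finset.mem_filter.mp (F.min'_mem hFne)).2
  have heq : sInf (TS G φ w) = F.min' hFne :=
    le_antisymm (csInf_le ⟨_, hlb⟩ hmem) (le_csInf ⟨t, ht⟩ hlb)
  rw [heq]; exact ⟨hmem, hlb⟩

lemma dt_le_iff {w : V} {j : ℝ} :
    deathTime G (mpsi φ) φ w ≤ (j : WithTop ℝ) ↔ j ∈ TS G φ w := by
  rw [deathTime_eq]
  split_ifs with h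
  · rw [WithTop.coe_le_coe]
    constructor
    · intro hle
      exact TS_mono G φ hle (TS_csInf_mem G φ h).1
    · intro hj
      exact csInf_le ⟨_, (TS_csInf_mem G φ h).2⟩ hj
  · constructor
    · intro hle
      exact absurd (top_le_iff.mp hle) (WithTop.coe_ne_top)
    · intro hj
      exact absurd ⟨j, hj⟩ h

lemma dt_lt_iff {w : V} {j : ℝ} :
    deathTime G (mpsi φ) φ w < (j : WithTop ℝ) ↔
      ∃ v, better G (mpsi φ) φ v w ∧ (eSub G (mpsi φ) true j).Reachable v w := by
  constructor
  · intro hlt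
    rw [deathTime_eq] at hlt
    split_ifs at hlt with h
    · rw [WithTop.coe_lt_coe] at hlt
      obtain ⟨v, hb, hre⟩ := (TS_csInf_mem G φ h).1
      refine ⟨v, hb, hre.mono ?_⟩
      intro a b hab
      refine ⟨hab.1, ?_⟩
      have h2 := hab.2
      simp only [if_neg Bool.false_ne_true] at h2
      simp only [if_pos rfl, if_true]
      calc mpsi φ s(a, b) ≤ sInf (TS G φ w) := h2
        _ < j := hlt
    · exact absurd hlt (by simp)
  · rintro ⟨v, hb, ⟨p⟩⟩
    obtain ⟨r, hre, a, b, hab, hr⟩ :=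
      walkLevel G φ (eSub_le G (mpsi φ) true j) p (better_ne G φ hb)
    have hrj : r < j := by
      have h2 := hab.2
      simp only [if_pos rfl, if_true] at h2
      rw [hr] at h2; exact h2
    have hrT : r ∈ TS G φ w := ⟨v, hb, hre⟩
    rw [deathTime_eq, if_pos ⟨r, hrT⟩]
    exact lt_of_le_of_lt
      (WithTop.coe_le_coe.mpr (csInf_le ⟨_, (TS_csInf_mem G φ ⟨r, hrT⟩).2⟩ hrT))
      (WithTop.coe_lt_coe.mpr hrj)

lemma dt_eq_top_iff {w : V} :
    deathTime G (mpsi φ) φ w = ⊤ ↔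
      ¬ ∃ v, better G (mpsi φ) φ v w ∧ G.Reachable v w := by
  rw [deathTime_eq]
  split_ifs with h
  · simp only [WithTop.coe_ne_top, false_iff, not_not]
    obtain ⟨t, v, hb, hre⟩ := h
    exact ⟨v, hb, hre.mono (eSub_le G _ _ _)⟩
  · simp only [true_iff]
    rintro ⟨v, hb, ⟨p⟩⟩
    obtain ⟨r, hre, -⟩ := walkLevel G φ le_rfl p (better_ne G φ hb)
    exact h ⟨r, v, hb, hre⟩

lemma phi_le_dt (w : V) : (φ w : WithTop ℝ) ≤ deathTime G (mpsi φ) φ w := by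
  rw [deathTime_eq]
  split_ifs with h
  · rw [WithTop.coe_le_coe]
    refine le_csInf h ?_
    rintro t ⟨v, hb, hre⟩
    obtain ⟨q⟩ := hre.symm
    cases q with
    | nil => exact absurd rfl (better_ne G φ hb).symm
    | cons hadj q =>
      have h2 := hadj.2
      simp only [if_neg Bool.false_ne_true] at h2
      rw [mpsi_mk] at h2
      exact le_trans (le_max_left _ _) h2
  · exact le_top

lemma card_comp {W : Type} [Fintype W] (H : SimpleGraph W) {L : Type} [LinearOrder L]
    (k : W → L) (hk : Function.Injective k) (P : W → Prop)
    (hP : ∀ v u : W, k v ≤ k u → P u → P v) :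
    Nat.card {K : H.ConnectedComponent // ∃ v, P v ∧ H.connectedComponentMk v = K} =
      Nat.card {w : W // P w ∧ ∀ v, H.Reachable v w → k w ≤ k v} := by
  classical
  refine (Nat.card_eq_of_bijective
    (fun w => ⟨H.connectedComponentMk w.1, w.1, w.2.1, rfl⟩) ⟨?_, ?_⟩).symm
  · rintro ⟨w1, hP1, hb1⟩ ⟨w2, hP2, hb2⟩ he
    simp only [Subtype.mk.injEq] at he ⊢
    have hre : H.Reachable w1 w2 := SimpleGraph.ConnectedComponent.exact he
    exact hk (le_antisymm (hb1 w2 hre.symm) (hb2 w1 hre))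
  · rintro ⟨K, v0, hv0, hKv0⟩
    have hne : (Finset.univ.filter (fun u => H.connectedComponentMk u = K)).Nonempty :=
      ⟨v0, by simp [hKv0]⟩
    obtain ⟨u, hu, hmin⟩ := Finset.exists_min_image _ k hne
    simp only [Finset.mem_filter, Finset.mem_univ, true_and] at hu
    refine ⟨⟨u, hP u v0 (hmin v0 (by simp [hKv0])) hv0, ?_⟩, ?_⟩
    · intro v hre
      exact hmin v (by simp [(SimpleGraph.ConnectedComponent.sound hre).trans hu])
    · exact Subtype.ext hu

lemma vBettiInf_eq (si : Bool) (i : ℝ) :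
    vBettiInf G φ si i =
      Nat.card {w : V // w ∈ sub φ si i ∧ deathTime G (mpsi φ) φ w = ⊤} := by
  rw [vBettiInf, card_comp G (key G φ) (key_injective G φ) (· ∈ sub φ si i)
    (fun v u hk hu => by
      have := key_fst_mono G φ hk
      cases si <;> simp only [sub, Set.mem_setOf_eq, if_pos, if_neg] at hu ⊢ <;>
        first
          | exact le_trans this hu
          | exact lt_of_le_of_lt this hu
          | skip)]
  apply Nat.card_congr
  apply Equiv.subtypeEquivRight
  intro w
  rw [dt_eq_top_iff, and_congr_right_iff]
  intro _
  constructor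
  · rintro hbest ⟨v, hb, hre⟩
    exact absurd (not_le.mpr ((better_iff G φ v w).mp hb)) (not_not.mpr (hbest v hre))
  · intro hne v hre
    by_contra hlt
    exact hne ⟨v, (better_iff G φ v w).mpr (lt_of_not_ge hlt), hre⟩

lemma vBetti_eq (si : Bool) (i : ℝ) (sj : Bool) (j : ℝ)
    (hsub : sub φ si i ⊆ sub φ sj j) :
    vBetti G φ si i sj j =
      Nat.card {w : V // w ∈ sub φ si i ∧
        ¬ ∃ v, better G (mpsi φ) φ v w ∧ (eSub G (mpsi φ) sj j).Reachable v w} := by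
  rw [vBetti, card_comp (G.induce (sub φ sj j)) (fun v => key G φ v.1)
    (fun a b hab => Subtype.ext (key_injective G φ hab))
    (fun v => (v : V) ∈ sub φ si i)
    (fun v u hk hu => by
      have := key_fst_mono G φ hk
      cases si <;> simp only [sub, Set.mem_setOf_eq, if_pos, if_neg] at hu ⊢ <;>
        first
          | exact le_trans this hu
          | exact lt_of_le_of_lt this hu
          | skip)]
  apply Nat.card_congr
  refine (Equiv.subtypeSubtypeEquivSubtypeExists _ _).trans
    (Equiv.subtypeEquivRight ?_)
  intro w
  constructor
  · rintro ⟨hS, h1, hbest⟩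
    refine ⟨h1, ?_⟩
    rintro ⟨v, hb, hre⟩
    have hvS : v ∈ sub φ sj j := start_mem_of_reachable G φ (better_ne G φ hb) hre
    have hind := (reachable_induce_iff G φ hvS hS).mpr hre
    exact absurd (not_le.mpr ((better_iff G φ v w).mp hb)) (not_not.mpr (hbest ⟨v, hvS⟩ hind))
  · rintro ⟨h1, hne⟩
    refine ⟨hsub h1, h1, ?_⟩
    rintro ⟨v, hvS⟩ hre
    by_contra hlt
    exact hne ⟨v, (better_iff G φ v w).mpr (lt_of_not_ge hlt),
      (reachable_induce_iff G φ hvS (hsub h1)).mp hre⟩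

lemma card_split (p q r : V → Prop) (hpq : ∀ w, p w ↔ q w ∨ r w)
    (hd : ∀ w, ¬ (q w ∧ r w)) :
    Nat.card {w : V // p w} = Nat.card {w : V // q w} + Nat.card {w : V // r w} := by
  classical
  simp only [Nat.card_eq_fintype_card, Fintype.card_subtype]
  have h1 : Finset.univ.filter p = Finset.univ.filter q ∪ Finset.univ.filter r := by
    ext w; simp [hpq w]
  have h2 : Disjoint (Finset.univ.filter q) (Finset.univ.filter r) := by
    rw [Finset.disjoint_left]
    intro w hw hw2
    simp only [Finset.mem_filter, Finset.mem_univ, true_and] at hw hw2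
    exact hd w ⟨hw, hw2⟩
  rw [h1, Finset.card_union_of_disjoint h2]

lemma vBetti_false_eq (si : Bool) (i : ℝ) (j : ℝ) (hsub : sub φ si i ⊆ sub φ false j) :
    vBetti G φ si i false j =
      Nat.card {w : V // w ∈ sub φ si i ∧
        ¬ deathTime G (mpsi φ) φ w ≤ (j : WithTop ℝ)} := by
  rw [vBetti_eq G φ si i false j hsub]
  exact Nat.card_congr (Equiv.subtypeEquivRight fun w =>
    and_congr_right fun _ => not_congr (dt_le_iff G φ).symm)

lemma vBetti_true_eq (si : Bool) (i : ℝ) (j : ℝ) (hsub : sub φ si i ⊆ sub φ true j) :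
    vBetti G φ si i true j =
      Nat.card {w : V // w ∈ sub φ si i ∧
        ¬ deathTime G (mpsi φ) φ w < (j : WithTop ℝ)} := by
  rw [vBetti_eq G φ si i true j hsub]
  exact Nat.card_congr (Equiv.subtypeEquivRight fun w =>
    and_congr_right fun _ => not_congr (dt_lt_iff G φ).symm)

lemma mem_sub_false (w : V) (t : ℝ) : w ∈ sub φ false t ↔ φ w ≤ t := by simp [sub]

lemma mem_sub_true (w : V) (t : ℝ) : w ∈ sub φ true t ↔ φ w < t := by simp [sub]

lemma vDiagram_eq (b : ℝ) (d : WithTop ℝ) :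
    vDiagram G φ (b, d) =
      Nat.card {w : V // φ w = b ∧ deathTime G (mpsi φ) φ w = d} := by
  induction d using WithTop.recTopCoe with
  | top =>
    simp only [vDiagram, WithTop.recTopCoe_top]
    rw [vBettiInf_eq G φ false b, vBettiInf_eq G φ true b]
    have e1 := card_split
      (fun w => w ∈ sub φ false b ∧ deathTime G (mpsi φ) φ w = ⊤)
      (fun w => w ∈ sub φ true b ∧ deathTime G (mpsi φ) φ w = ⊤)
      (fun w => φ w = b ∧ deathTime G (mpsi φ) φ w = ⊤)
      (fun w => by
        simp only [mem_sub_false, mem_sub_true]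
        constructor
        · rintro ⟨h1, h2⟩
          rcases lt_or_eq_of_le h1 with h | h
          · exact Or.inl ⟨h, h2⟩
          · exact Or.inr ⟨h, h2⟩
        · rintro (⟨h1, h2⟩ | ⟨h1, h2⟩)
          · exact ⟨h1.le, h2⟩
          · exact ⟨h1.le, h2⟩)
      (fun w => by
        simp only [mem_sub_true]
        rintro ⟨⟨h1, -⟩, h2, -⟩
        exact absurd h2 h1.ne)
    omega
  | coe d =>
    simp only [vDiagram, WithTop.recTopCoe_coe]
    by_cases hbd : b = d
    · subst hbd
      rw [if_pos rfl]
      rw [vBetti_false_eq G φ false b b (fun w hw => hw),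
        vBetti_false_eq G φ true b b (fun w hw => by rw [mem_sub_true] at hw; rw [mem_sub_false]; exact hw.le)]
      have e1 := card_split
        (fun w => w ∈ sub φ false b ∧ ¬ deathTime G (mpsi φ) φ w ≤ (b : WithTop ℝ))
        (fun w => w ∈ sub φ true b ∧ ¬ deathTime G (mpsi φ) φ w ≤ (b : WithTop ℝ))
        (fun w => φ w = b ∧ ¬ deathTime G (mpsi φ) φ w ≤ (b : WithTop ℝ))
        (fun w => by
          simp only [mem_sub_false, mem_sub_true]
          constructor
          · rintro ⟨h1, h2⟩
            rcases lt_or_eq_of_le h1 with h | h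
            · exact Or.inl ⟨h, h2⟩
            · exact Or.inr ⟨h, h2⟩
          · rintro (⟨h1, h2⟩ | ⟨h1, h2⟩)
            · exact ⟨h1.le, h2⟩
            · exact ⟨h1.le, h2⟩)
        (fun w => by
          simp only [mem_sub_true]
          rintro ⟨⟨h1, -⟩, h2, -⟩
          exact absurd h2 h1.ne)
      have e2 := card_split
        (fun w => φ w = b)
        (fun w => φ w = b ∧ ¬ deathTime G (mpsi φ) φ w ≤ (b : WithTop ℝ))
        (fun w => φ w = b ∧ deathTime G (mpsi φ) φ w = (b : WithTop ℝ))
        (fun w => by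
          constructor
          · intro h1
            by_cases h2 : deathTime G (mpsi φ) φ w ≤ (b : WithTop ℝ)
            · refine Or.inr ⟨h1, le_antisymm h2 ?_⟩
              rw [← h1]
              exact phi_le_dt G φ w
            · exact Or.inl ⟨h1, h2⟩
          · rintro (⟨h1, -⟩ | ⟨h1, -⟩) <;> exact h1)
        (fun w => by
          rintro ⟨⟨-, h2⟩, -, h3⟩
          exact h2 h3.le)
      omega
    · rw [if_neg hbd]
      by_cases hlt : b < d
      · rw [if_pos hlt]
        rw [vBetti_true_eq G φ false b d
            (fun w hw => by rw [mem_sub_false] at hw; rw [mem_sub_true]; linarith),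
          vBetti_false_eq G φ false b d
            (fun w hw => by rw [mem_sub_false] at hw ⊢; linarith),
          vBetti_true_eq G φ true b d
            (fun w hw => by rw [mem_sub_true] at hw ⊢; linarith),
          vBetti_false_eq G φ true b d
            (fun w hw => by rw [mem_sub_true] at hw; rw [mem_sub_false]; linarith)]
        have key1 : ∀ w, ¬ deathTime G (mpsi φ) φ w < (d : WithTop ℝ) ↔
            (deathTime G (mpsi φ) φ w = (d : WithTop ℝ) ∨
              ¬ deathTime G (mpsi φ) φ w ≤ (d : WithTop ℝ)) := by
          intro w
          rw [not_lt, not_le]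
          constructor
          · intro h1
            rcases eq_or_lt_of_le h1 with h | h
            · exact Or.inl h.symm
            · exact Or.inr h
          · rintro (h | h)
            · exact h.ge
            · exact h.le
        have e1 := card_split
          (fun w => w ∈ sub φ false b ∧ ¬ deathTime G (mpsi φ) φ w < (d : WithTop ℝ))
          (fun w => w ∈ sub φ false b ∧ deathTime G (mpsi φ) φ w = (d : WithTop ℝ))
          (fun w => w ∈ sub φ false b ∧ ¬ deathTime G (mpsi φ) φ w ≤ (d : WithTop ℝ))
          (fun w => by rw [key1 w]; tauto)
          (fun w => by rintro ⟨⟨-, h2⟩, -, h3⟩; exact h3 h2.le)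
        have e2 := card_split
          (fun w => w ∈ sub φ true b ∧ ¬ deathTime G (mpsi φ) φ w < (d : WithTop ℝ))
          (fun w => w ∈ sub φ true b ∧ deathTime G (mpsi φ) φ w = (d : WithTop ℝ))
          (fun w => w ∈ sub φ true b ∧ ¬ deathTime G (mpsi φ) φ w ≤ (d : WithTop ℝ))
          (fun w => by rw [key1 w]; tauto)
          (fun w => by rintro ⟨⟨-, h2⟩, -, h3⟩; exact h3 h2.le)
        have e3 := card_split
          (fun w => w ∈ sub φ false b ∧ deathTime G (mpsi φ) φ w = (d : WithTop ℝ))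
          (fun w => w ∈ sub φ true b ∧ deathTime G (mpsi φ) φ w = (d : WithTop ℝ))
          (fun w => φ w = b ∧ deathTime G (mpsi φ) φ w = (d : WithTop ℝ))
          (fun w => by
            simp only [mem_sub_false, mem_sub_true]
            constructor
            · rintro ⟨h1, h2⟩
              rcases lt_or_eq_of_le h1 with h | h
              · exact Or.inl ⟨h, h2⟩
              · exact Or.inr ⟨h, h2⟩
            · rintro (⟨h1, h2⟩ | ⟨h1, h2⟩)
              · exact ⟨h1.le, h2⟩
              · exact ⟨h1.le, h2⟩)
          (fun w => by
            simp only [mem_sub_true]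
            rintro ⟨⟨h1, -⟩, h2, -⟩
            exact absurd h2 h1.ne)
        omega
      · rw [if_neg hlt]
        have hdb : d < b := lt_of_le_of_ne (not_lt.mp hlt) (fun he => hbd he.symm)
        have hemp : IsEmpty {w : V // φ w = b ∧
            deathTime G (mpsi φ) φ w = (d : WithTop ℝ)} := by
          refine ⟨fun w => ?_⟩
          obtain ⟨h1, h2⟩ := w.2
          have := phi_le_dt G φ w.1
          rw [h1, h2, WithTop.coe_le_coe] at this
          exact absurd this (not_le.mpr hdb)
        rw [Nat.card_of_isEmpty]

lemma vDiagram_eq' (b : ℝ) (d : WithTop ℝ) :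
    vDiagram G φ (b, d) =
      Nat.card {w : V // deathTime G (mpsi φ) φ w = d ∧ φ w = b} := by
  rw [vDiagram_eq G φ b d]
  exact Nat.card_congr (Equiv.subtypeEquivRight fun w => and_comm)

lemma card_fiber {W : Type} [Fintype W] (Q : W → Prop) (g : W → ℝ) (T : Finset ℝ)
    (hT : ∀ v, g v ∈ T) :
    Nat.card {w : W // Q w} = ∑ γ ∈ T, Nat.card {w : W // Q w ∧ g w = γ} := by
  classical
  simp only [Nat.card_eq_fintype_card, Fintype.card_subtype]
  rw [Finset.card_eq_sum_card_fiberwise (f := g) (t := T) (fun x _ => hT x)]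
  refine Finset.sum_congr rfl fun γ _ => ?_
  congr 1
  rw [Finset.filter_filter]

lemma maxFe_comp {X : Type} (c : V → X) (f : X → ℝ) :
    (fun e => maxFe f (Sym2.map c e)) = mpsi (fun v => f (c v)) := by
  funext e
  induction e using Sym2.ind with
  | _ u v => rfl

end PH
end Aux

/-- RePHINE subsumes vertex-color persistence: if an injective color
filter `f` distinguishes the vertex-color 0-dim persistence diagrams of `G` and `G'`,
then the RePHINE diagrams with vertex filter `f_v = f` and edge filter
`f_e({x,y}) = max (f x) (f y)` on the derived edge colors also differ. -/
theorem stmt18 {V V' X : Type} [Fintype V] [Fintype V'] [LinearOrder V] [LinearOrder V']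
    (G : SimpleGraph V) (G' : SimpleGraph V') (c : V → X) (c' : V' → X)
    (f : X → ℝ) (hf : Function.Injective f)
    (h : PH.vDiagram G (fun v => f (c v)) ≠ PH.vDiagram G' (fun v => f (c' v))) :
    PH.rephine G c f (PH.maxFe f) ≠ PH.rephine G' c' f (PH.maxFe f) := by
  intro hre
  apply h
  funext p
  obtain ⟨b, d⟩ := p
  rw [PH.vDiagram_eq' G (fun v => f (c v)) b d, PH.vDiagram_eq' G' (fun v => f (c' v)) b d]
  set T := Finset.image (PH.gammaVal G (PH.mpsi fun v => f (c v))) Finset.univ ∪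
    Finset.image (PH.gammaVal G' (PH.mpsi fun v => f (c' v))) Finset.univ with hT
  rw [PH.card_fiber _ (PH.gammaVal G (PH.mpsi fun v => f (c v))) T
      (fun v => Finset.mem_union_left _ (Finset.mem_image_of_mem _ (Finset.mem_univ v))),
    PH.card_fiber _ (PH.gammaVal G' (PH.mpsi fun v => f (c' v))) T
      (fun v => Finset.mem_union_right _ (Finset.mem_image_of_mem _ (Finset.mem_univ v)))]
  refine Finset.sum_congr rfl fun γ _ => ?_
  have hpt := congrFun hre (0, d, b, γ)
  simp only [PH.rephine, PH.maxFe_comp, PH.rephineAux, if_pos rfl] at hpt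
  rw [Nat.card_congr (Equiv.subtypeEquivRight
      (fun w : V => and_assoc (a := PH.deathTime G (PH.mpsi fun v => f (c v))
        (fun v => f (c v)) w = d))),
    Nat.card_congr (Equiv.subtypeEquivRight
      (fun w : V' => and_assoc (a := PH.deathTime G' (PH.mpsi fun v => f (c' v))
        (fun v => f (c' v)) w = d)))]
  exact hpt

end
end

section
/- For two edge-colored graphs G and G' and any injective edge-color filter f with 0-dim edge-filtration diagrams D_G ≠ D_{G'}, the RePHINE diagrams of G and G' under edge filter f_e = f (and any vertex filter f_v) also differ: the multiset of (birth, death) pairs of RePHINE tuples with birth 0 equals the 0-dim edge-color persistence diagram. -/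
open scoped Classical

noncomputable section

section Aux

open PH

variable {V : Type} [Fintype V] [LinearOrder V]
variable (G : SimpleGraph V) (ψ : Sym2 V → ℝ) (φ : V → ℝ)

/-- The lexicographic key governing the `better` relation. -/
def pkey (v : V) : Lex (ℝ × Lex (ℝ × V)) := toLex (φ v, toLex (gammaVal G ψ v, v))

lemma better_iff_key {v w : V} :
    better G ψ φ v w ↔ pkey G ψ φ v < pkey G ψ φ w := by
  simp [better, pkey, Prod.Lex.lt_iff]

lemma better_irrefl (w : V) : ¬ better G ψ φ w w := by
  rw [better_iff_key]; exact lt_irrefl _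

lemma pkey_injective : Function.Injective (pkey G ψ φ) := by
  intro v w h
  have := congrArg (fun x => (ofLex (ofLex x).2).2) h
  simpa [pkey] using this

/-- `w` is the preferred representative of its `H`-component. -/
def IsBest (H : SimpleGraph V) (w : V) : Prop :=
  ¬ ∃ v, better G ψ φ v w ∧ H.Reachable v w

lemma card_isBest (H : SimpleGraph V) :
    Nat.card {w : V // IsBest G ψ φ H w} = numComponents H := by
  rw [numComponents]
  apply Nat.card_eq_of_bijective (fun w => H.connectedComponentMk w.1)
  constructor
  · rintro ⟨w1, h1⟩ ⟨w2, h2⟩ hmk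
    have hr : H.Reachable w1 w2 := (SimpleGraph.ConnectedComponent.eq).1 hmk
    rcases lt_trichotomy (pkey G ψ φ w1) (pkey G ψ φ w2) with hk | hk | hk
    · exact absurd ⟨w1, (better_iff_key G ψ φ).2 hk, hr⟩ h2
    · exact Subtype.ext (pkey_injective G ψ φ hk)
    · exact absurd ⟨w2, (better_iff_key G ψ φ).2 hk, hr.symm⟩ h1
  · intro K
    obtain ⟨v0, hv0⟩ := K.exists_rep
    obtain ⟨w, hw, hmin⟩ := Finset.exists_min_image
      (Finset.univ.filter fun v => H.connectedComponentMk v = K) (pkey G ψ φ)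
      ⟨v0, Finset.mem_filter.2 ⟨Finset.mem_univ _, hv0⟩⟩
    have hwK : H.connectedComponentMk w = K := (Finset.mem_filter.1 hw).2
    refine ⟨⟨w, ?_⟩, hwK⟩
    rintro ⟨v, hb, hr⟩
    have hvK : H.connectedComponentMk v = K := by
      rw [← hwK]; exact (SimpleGraph.ConnectedComponent.eq).2 hr
    have := hmin v (Finset.mem_filter.2 ⟨Finset.mem_univ _, hvK⟩)
    exact absurd ((better_iff_key G ψ φ).1 hb) (not_lt.2 this)

lemma eSub_adj_false {r : ℝ} {u v : V} :
    (eSub G ψ false r).Adj u v ↔ G.Adj u v ∧ ψ s(u, v) ≤ r := by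
  simp [eSub]

lemma eSub_adj_true {r : ℝ} {u v : V} :
    (eSub G ψ true r).Adj u v ↔ G.Adj u v ∧ ψ s(u, v) < r := by
  simp [eSub]

lemma eSub_mono_le {r t : ℝ} (h : r ≤ t) :
    eSub G ψ false r ≤ eSub G ψ false t := by
  intro u v huv
  rw [eSub_adj_false] at huv ⊢
  exact ⟨huv.1, huv.2.trans h⟩

lemma eSub_mono_lt {r t : ℝ} (h : r < t) :
    eSub G ψ false r ≤ eSub G ψ true t := by
  intro u v huv
  rw [eSub_adj_false] at huv
  rw [eSub_adj_true]
  exact ⟨huv.1, lt_of_le_of_lt huv.2 h⟩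

lemma eSub_le_self {t : ℝ} : eSub G ψ true t ≤ eSub G ψ false t := by
  intro u v huv
  rw [eSub_adj_true] at huv
  rw [eSub_adj_false]
  exact ⟨huv.1, le_of_lt huv.2⟩

lemma eSub_le_graph {b : Bool} {t : ℝ} : eSub G ψ b t ≤ G := fun _ _ h => h.1

/-- Along a nontrivial walk in a subgraph of `G`, the maximum `ψ`-value `r` of its
edges is attained on an edge of the subgraph, and the walk lives in `eSub G ψ false r`. -/
lemma walk_level {H : SimpleGraph V} (hH : H ≤ G) {v w : V}
    (p : H.Walk v w) (hvw : v ≠ w) :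
    ∃ r : ℝ, (∃ u u' : V, H.Adj u u' ∧ ψ s(u, u') = r) ∧
      (eSub G ψ false r).Reachable v w := by
  induction p with
  | nil => exact absurd rfl hvw
  | @cons v u w h q ih =>
    by_cases hu : u = w
    · subst hu
      refine ⟨ψ s(v, u), ⟨v, u, h, rfl⟩, SimpleGraph.Adj.reachable ?_⟩
      rw [eSub_adj_false]
      exact ⟨hH h, le_rfl⟩
    · obtain ⟨r', hw', hr'⟩ := ih hu
      refine ⟨max (ψ s(v, u)) r', ?_, ?_⟩
      · rcases le_total (ψ s(v, u)) r' with hle | hle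
        · obtain ⟨a, b, hab, hab'⟩ := hw'
          exact ⟨a, b, hab, by rw [hab', max_eq_right hle]⟩
        · exact ⟨v, u, h, (max_eq_left hle).symm⟩
      · refine SimpleGraph.Reachable.trans (SimpleGraph.Adj.reachable ?_)
          (hr'.mono (eSub_mono_le G ψ (le_max_right _ _)))
        rw [eSub_adj_false]
        exact ⟨hH h, le_max_left _ _⟩

/-- The set of levels at which `w` has been merged with a preferred vertex. -/
def deathSet (w : V) : Set ℝ :=
  {t : ℝ | ∃ v, better G ψ φ v w ∧ (eSub G ψ false t).Reachable v w}

lemma deathSet_mono {w : V} {t t' : ℝ} (h : t ∈ deathSet G ψ φ w) (htt : t ≤ t') :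
    t' ∈ deathSet G ψ φ w := by
  obtain ⟨v, hb, hr⟩ := h
  exact ⟨v, hb, hr.mono (eSub_mono_le G ψ htt)⟩

lemma ne_of_better {v w : V} (h : better G ψ φ v w) : v ≠ w := by
  rintro rfl; exact better_irrefl G ψ φ _ h

lemma deathSet_reduce {w : V} {t : ℝ} (h : t ∈ deathSet G ψ φ w) :
    ∃ r ∈ deathSet G ψ φ w, r ≤ t ∧ r ∈ Finset.image ψ G.edgeFinset := by
  obtain ⟨v, hb, hr⟩ := h
  obtain ⟨p⟩ := hr
  obtain ⟨r, ⟨a, b, hab, hab'⟩, hreach⟩ :=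
    walk_level G ψ (eSub_le_graph G ψ) p (ne_of_better G ψ φ hb)
  rw [eSub_adj_false] at hab
  refine ⟨r, ⟨v, hb, hreach⟩, hab'.symm ▸ hab.2, ?_⟩
  refine Finset.mem_image.2 ⟨s(a, b), ?_, hab'⟩
  rw [SimpleGraph.mem_edgeFinset, SimpleGraph.mem_edgeSet]
  exact hab.1

lemma deathSet_isLeast {w : V} (h : (deathSet G ψ φ w).Nonempty) :
    ∃ m, IsLeast (deathSet G ψ φ w) m := by
  classical
  set s : Finset ℝ := (Finset.image ψ G.edgeFinset).filter (· ∈ deathSet G ψ φ w) with hs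
  have hsne : s.Nonempty := by
    obtain ⟨t, ht⟩ := h
    obtain ⟨r, hrS, _, hrF⟩ := deathSet_reduce G ψ φ ht
    exact ⟨r, Finset.mem_filter.2 ⟨hrF, hrS⟩⟩
  refine ⟨s.min' hsne, (Finset.mem_filter.1 (s.min'_mem hsne)).2, ?_⟩
  intro t ht
  obtain ⟨r, hrS, hrt, hrF⟩ := deathSet_reduce G ψ φ ht
  exact le_trans (s.min'_le r (Finset.mem_filter.2 ⟨hrF, hrS⟩)) hrt

lemma deathTime_of_nonempty {w : V} (h : (deathSet G ψ φ w).Nonempty) :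
    ∃ m, IsLeast (deathSet G ψ φ w) m ∧ deathTime G ψ φ w = (m : WithTop ℝ) := by
  obtain ⟨m, hm⟩ := deathSet_isLeast G ψ φ h
  refine ⟨m, hm, ?_⟩
  have hex : ∃ t : ℝ, ∃ v, better G ψ φ v w ∧ (eSub G ψ false t).Reachable v w := h
  rw [deathTime, dif_pos hex]
  exact congrArg (fun r : ℝ => (r : WithTop ℝ)) hm.csInf_eq

lemma deathTime_of_empty {w : V} (h : ¬ (deathSet G ψ φ w).Nonempty) :
    deathTime G ψ φ w = ⊤ := by
  have hex : ¬ ∃ t : ℝ, ∃ v, better G ψ φ v w ∧ (eSub G ψ false t).Reachable v w := by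
    intro ⟨t, ht⟩; exact h ⟨t, ht⟩
  rw [deathTime, dif_neg hex]

lemma deathTime_eq_top_iff {w : V} :
    deathTime G ψ φ w = ⊤ ↔ IsBest G ψ φ G w := by
  constructor
  · intro h
    rintro ⟨v, hb, hr⟩
    obtain ⟨p⟩ := hr
    obtain ⟨r, _, hreach⟩ := walk_level G ψ le_rfl p (ne_of_better G ψ φ hb)
    have hne : (deathSet G ψ φ w).Nonempty := ⟨r, v, hb, hreach⟩
    obtain ⟨m, _, hm⟩ := deathTime_of_nonempty G ψ φ hne
    rw [h] at hm
    exact (WithTop.coe_ne_top hm.symm).elim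
  · intro hbest
    apply deathTime_of_empty
    rintro ⟨t, v, hb, hr⟩
    exact hbest ⟨v, hb, hr.mono (eSub_le_graph G ψ)⟩

lemma deathTime_le_iff {w : V} {t : ℝ} :
    deathTime G ψ φ w ≤ (t : WithTop ℝ) ↔ t ∈ deathSet G ψ φ w := by
  by_cases h : (deathSet G ψ φ w).Nonempty
  · obtain ⟨m, hm, hdt⟩ := deathTime_of_nonempty G ψ φ h
    rw [hdt, WithTop.coe_le_coe]
    constructor
    · intro hmt; exact deathSet_mono G ψ φ hm.1 hmt
    · intro ht; exact hm.2 ht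
  · rw [deathTime_of_empty G ψ φ h]
    simp only [top_le_iff]
    constructor
    · intro htop; exact (WithTop.coe_ne_top htop).elim
    · intro ht; exact absurd ⟨t, ht⟩ h

lemma deathTime_lt_iff {w : V} {d : ℝ} :
    deathTime G ψ φ w < (d : WithTop ℝ) ↔
      ∃ v, better G ψ φ v w ∧ (eSub G ψ true d).Reachable v w := by
  constructor
  · intro hlt
    by_cases h : (deathSet G ψ φ w).Nonempty
    · obtain ⟨m, hm, hdt⟩ := deathTime_of_nonempty G ψ φ h
      rw [hdt, WithTop.coe_lt_coe] at hlt
      obtain ⟨v, hb, hr⟩ := hm.1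
      exact ⟨v, hb, hr.mono (eSub_mono_lt G ψ hlt)⟩
    · rw [deathTime_of_empty G ψ φ h] at hlt
      exact absurd hlt (by simp)
  · rintro ⟨v, hb, hr⟩
    obtain ⟨p⟩ := hr
    obtain ⟨r, ⟨a, b, hab, hab'⟩, hreach⟩ :=
      walk_level G ψ (eSub_le_graph G ψ) p (ne_of_better G ψ φ hb)
    rw [eSub_adj_true] at hab
    have hrd : r < d := hab'.symm ▸ hab.2
    have hrS : r ∈ deathSet G ψ φ w := ⟨v, hb, hreach⟩
    obtain ⟨m, hm, hdt⟩ := deathTime_of_nonempty G ψ φ ⟨r, hrS⟩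
    rw [hdt, WithTop.coe_lt_coe]
    exact lt_of_le_of_lt (hm.2 hrS) hrd

lemma deathTime_eq_coe_iff {w : V} {d : ℝ} :
    deathTime G ψ φ w = (d : WithTop ℝ) ↔
      ¬ IsBest G ψ φ (eSub G ψ false d) w ∧ IsBest G ψ φ (eSub G ψ true d) w := by
  rw [le_antisymm_iff, ← not_lt (a := deathTime G ψ φ w)]
  rw [deathTime_le_iff, deathTime_lt_iff]
  rw [deathSet]
  simp only [Set.mem_setOf_eq, IsBest, not_not]

lemma isBest_mono {w : V} {d : ℝ} (h : IsBest G ψ φ (eSub G ψ false d) w) :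
    IsBest G ψ φ (eSub G ψ true d) w := by
  rintro ⟨v, hb, hr⟩
  exact h ⟨v, hb, hr.mono (eSub_le_self G ψ)⟩

lemma nat_card_eq_filter (p : V → Prop) [DecidablePred p] :
    Nat.card {w : V // p w} = (Finset.univ.filter p).card := by
  rw [← Fintype.card_subtype, Nat.card_eq_fintype_card]

/-- **Core counting lemma**: the multiset of death times of RePHINE `b = 0` tuples
coincides with the 0-dimensional edge-filtration persistence diagram. -/
lemma card_deathTime_eq (d : WithTop ℝ) :
    Nat.card {w : V // deathTime G ψ φ w = d} = eDiagram G ψ (0, d) := by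
  classical
  induction d using WithTop.recTopCoe with
  | top =>
    have : Nat.card {w : V // deathTime G ψ φ w = ⊤} =
        Nat.card {w : V // IsBest G ψ φ G w} :=
      Nat.card_congr (Equiv.subtypeEquivRight (fun w => deathTime_eq_top_iff G ψ φ))
    rw [this, card_isBest]
    simp [eDiagram]
  | coe d =>
    have hsub : Finset.univ.filter (fun w => IsBest G ψ φ (eSub G ψ false d) w) ⊆
        Finset.univ.filter (fun w => IsBest G ψ φ (eSub G ψ true d) w) := by
      intro w hw
      rw [Finset.mem_filter] at hw ⊢
      exact ⟨hw.1, isBest_mono G ψ φ hw.2⟩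
    have hset : Finset.univ.filter (fun w => deathTime G ψ φ w = (d : WithTop ℝ)) =
        Finset.univ.filter (fun w => IsBest G ψ φ (eSub G ψ true d) w) \
          Finset.univ.filter (fun w => IsBest G ψ φ (eSub G ψ false d) w) := by
      ext w
      rw [Finset.mem_sdiff, Finset.mem_filter, Finset.mem_filter, Finset.mem_filter]
      rw [deathTime_eq_coe_iff]
      tauto
    rw [nat_card_eq_filter, hset, Finset.card_sdiff_of_subset hsub]
    rw [← nat_card_eq_filter, ← nat_card_eq_filter, card_isBest, card_isBest]
    simp [eDiagram]

/-- Decomposing the count of vertices with a given death time over the possible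
values of the vertex filter and of `γ`. -/
lemma card_deathTime_sum (d : WithTop ℝ) (A B : Finset ℝ)
    (hA : ∀ w : V, φ w ∈ A) (hB : ∀ w : V, gammaVal G ψ w ∈ B) :
    Nat.card {w : V // deathTime G ψ φ w = d} =
      ∑ a ∈ A, ∑ g ∈ B, Nat.card {w : V // deathTime G ψ φ w = d ∧
        φ w = a ∧ gammaVal G ψ w = g} := by
  classical
  rw [nat_card_eq_filter]
  rw [Finset.card_eq_sum_card_fiberwise (f := φ) (t := A) (fun w _ => hA w)]
  refine Finset.sum_congr rfl (fun a _ => ?_)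
  rw [Finset.card_eq_sum_card_fiberwise (f := gammaVal G ψ) (t := B)
    (fun w _ => hB w)]
  refine Finset.sum_congr rfl (fun g _ => ?_)
  rw [nat_card_eq_filter, Finset.filter_filter, Finset.filter_filter]

lemma rephineAux_zero (d : WithTop ℝ) (a g : ℝ) :
    rephineAux G φ ψ (0, d, a, g) =
      Nat.card {w : V // deathTime G ψ φ w = d ∧ φ w = a ∧ gammaVal G ψ w = g} := by
  simp [rephineAux]

end Aux

/-- RePHINE subsumes edge-color persistence: projecting the `b = 0`
RePHINE tuples onto their (birth, death) components recovers the 0-dim edge-color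
persistence diagram; consequently, if an injective positive color filter `f` on edge
colorings `l`, `l'` distinguishes the edge-color 0-dim diagrams of `G` and `G'`, then
the RePHINE diagrams with edge filter `f_e = f` (and any vertex filter `f_v`) differ. -/
theorem stmt19 {V V' X Y : Type} [Fintype V] [Fintype V'] [LinearOrder V] [LinearOrder V']
    (G : SimpleGraph V) (G' : SimpleGraph V') (l : Sym2 V → X) (l' : Sym2 V' → X)
    (f : X → ℝ) (hf : Function.Injective f) (hpos : ∀ x, 0 < f x)
    (c : V → Y) (c' : V' → Y) (fv : Y → ℝ)
    (h : PH.eDiagram G (fun e => f (l e)) ≠ PH.eDiagram G' (fun e => f (l' e))) :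
    (∀ d : WithTop ℝ,
      Nat.card {w : V // PH.deathTime G (fun e => f (l e)) (fun v => fv (c v)) w = d} =
        PH.eDiagram G (fun e => f (l e)) (0, d)) ∧
    PH.rephineAux G (fun v => fv (c v)) (fun e => f (l e)) ≠
      PH.rephineAux G' (fun v => fv (c' v)) (fun e => f (l' e)) := by
  classical
  refine ⟨fun d => card_deathTime_eq G (fun e => f (l e)) (fun v => fv (c v)) d, ?_⟩
  intro heq
  apply h
  funext p
  obtain ⟨b, d⟩ := p
  by_cases hb : b = 0
  · subst hb
    set ψ : Sym2 V → ℝ := fun e => f (l e) with hψ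
    set ψ' : Sym2 V' → ℝ := fun e => f (l' e) with hψ'
    set φ : V → ℝ := fun v => fv (c v) with hφ
    set φ' : V' → ℝ := fun v => fv (c' v) with hφ'
    set A : Finset ℝ :=
      Finset.image φ Finset.univ ∪ Finset.image φ' Finset.univ with hA0
    set B : Finset ℝ := Finset.image (PH.gammaVal G ψ) Finset.univ ∪
      Finset.image (PH.gammaVal G' ψ') Finset.univ with hB0
    have hA : ∀ w : V, φ w ∈ A := fun w =>
      Finset.mem_union_left _ (Finset.mem_image_of_mem _ (Finset.mem_univ w))
    have hA' : ∀ w : V', φ' w ∈ A := fun w =>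
      Finset.mem_union_right _ (Finset.mem_image_of_mem _ (Finset.mem_univ w))
    have hB : ∀ w : V, PH.gammaVal G ψ w ∈ B := fun w =>
      Finset.mem_union_left _ (Finset.mem_image_of_mem _ (Finset.mem_univ w))
    have hB' : ∀ w : V', PH.gammaVal G' ψ' w ∈ B := fun w =>
      Finset.mem_union_right _ (Finset.mem_image_of_mem _ (Finset.mem_univ w))
    rw [← card_deathTime_eq G ψ φ d, ← card_deathTime_eq G' ψ' φ' d]
    rw [card_deathTime_sum G ψ φ d A B hA hB,
      card_deathTime_sum G' ψ' φ' d A B hA' hB']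
    refine Finset.sum_congr rfl fun a _ => Finset.sum_congr rfl fun g _ => ?_
    rw [← rephineAux_zero G ψ φ, ← rephineAux_zero G' ψ' φ']
    exact congrFun heq (0, d, a, g)
  · simp [PH.eDiagram, hb]

end
end
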